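/- For guaranteed scoring games G and H: Ls(G+X) ≥ Ls(H+X) for all guaranteed X if and only if Rs(G+Y) ≥ Rs(H+Y) for all guaranteed Y. -/

import Mathlib

/-- A scoring game: `la`/`ra` are the atom values (relevant when the
corresponding option list is empty), `L`/`R` the Left and Right options. -/
inductive SG : Type
  | mk (la ra : ℝ) (L R : List SG) : SG

namespace SG

theorem sizeOf_lt_of_mem {g : SG} {l : List SG} (h : g ∈ l) : sizeOf g < sizeOf l :=
  List.sizeOf_lt_of_mem h

noncomputable instance : DecidableEq SG := Classical.decEq _

def la : SG → ℝ | mk a _ _ _ => a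
def ra : SG → ℝ | mk _ b _ _ => b
def L : SG → List SG | mk _ _ l _ => l
def R : SG → List SG | mk _ _ _ r => r

/-- The list of atom values occurring in atomic followers of a game. -/
def atomList : SG → List ℝ
  | mk a b ls rs =>
    (if ls.isEmpty then [a] else (ls.attach.map (fun x => atomList x.1)).flatten)
    ++ (if rs.isEmpty then [b] else (rs.attach.map (fun x => atomList x.1)).flatten)
decreasing_by all_goals (simp only [SG.mk.sizeOf_spec]; (first | (have := sizeOf_lt_of_mem x.2) | (have := sizeOf_lt_of_mem (by assumption : x ∈ _))); omega)

/-- The guaranteed condition. -/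
def Guaranteed : SG → Prop
  | mk a b ls rs =>
    (∀ x ∈ ls, Guaranteed x) ∧ (∀ x ∈ rs, Guaranteed x) ∧
    (ls = [] → ∀ s ∈ (mk a b ls rs).atomList, a ≤ s) ∧
    (rs = [] → ∀ s ∈ (mk a b ls rs).atomList, s ≤ b)
decreasing_by all_goals (simp only [SG.mk.sizeOf_spec]; (first | (have := sizeOf_lt_of_mem x.2) | (have := sizeOf_lt_of_mem (by assumption : x ∈ _))); omega)

/-- Disjunctive sum. -/
noncomputable def add : SG → SG → SG
  | mk a1 b1 L1 R1, mk a2 b2 L2 R2 =>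
    mk (a1 + a2) (b1 + b2)
      (L1.attach.map (fun x => add x.1 (mk a2 b2 L2 R2))
        ++ L2.attach.map (fun x => add (mk a1 b1 L1 R1) x.1))
      (R1.attach.map (fun x => add x.1 (mk a2 b2 L2 R2))
        ++ R2.attach.map (fun x => add (mk a1 b1 L1 R1) x.1))
termination_by g h => sizeOf g + sizeOf h
decreasing_by all_goals (simp only [SG.mk.sizeOf_spec]; (first | (have := sizeOf_lt_of_mem x.2) | (have := sizeOf_lt_of_mem (by assumption : x ∈ _))); omega)

/-- Left- and Right-stops (as a pair). -/
noncomputable def stops : SG → ℝ × ℝ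
  | mk a b ls rs =>
    (if ls.isEmpty then a else ((ls.attach.map (fun x => (stops x.1).2)).maximum.unbotD 0),
     if rs.isEmpty then b else ((rs.attach.map (fun x => (stops x.1).1)).minimum.untopD 0))
decreasing_by all_goals (simp only [SG.mk.sizeOf_spec]; (first | (have := sizeOf_lt_of_mem x.2) | (have := sizeOf_lt_of_mem (by assumption : x ∈ _))); omega)

noncomputable def Ls (g : SG) : ℝ := g.stops.1
noncomputable def Rs (g : SG) : ℝ := g.stops.2

/-- The conjugate: interchange Left and Right and negate atoms. -/
noncomputable def conj : SG → SG
  | mk a b ls rs =>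
    mk (-b) (-a) (rs.attach.map (fun x => conj x.1)) (ls.attach.map (fun x => conj x.1))
decreasing_by all_goals (simp only [SG.mk.sizeOf_spec]; (first | (have := sizeOf_lt_of_mem x.2) | (have := sizeOf_lt_of_mem (by assumption : x ∈ _))); omega)

/-- The game ⟨∅^s | ∅^s⟩ of a real number `s`. -/
def num (s : ℝ) : SG := mk s s [] []

/-- The zero game ⟨∅^0 | ∅^0⟩. -/
def zero : SG := num 0

/-- Waiting moves: the image of the Normal-play integer `n`. -/
def wait : ℕ → SG
  | 0 => zero
  | n + 1 => mk 0 0 [wait n] []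

/-- Birthday: the depth of the game tree. -/
def birthday : SG → ℕ
  | mk _ _ ls rs =>
    max ((ls.attach.map (fun x => birthday x.1 + 1)).maximum.unbotD 0)
        ((rs.attach.map (fun x => birthday x.1 + 1)).maximum.unbotD 0)
decreasing_by all_goals (simp only [SG.mk.sizeOf_spec]; (first | (have := sizeOf_lt_of_mem x.2) | (have := sizeOf_lt_of_mem (by assumption : x ∈ _))); omega)

/-- `Ge G H` is the order `G ≽ H`. -/
def Ge (G H : SG) : Prop :=
  ∀ X : SG, X.Guaranteed → Ls (G.add X) ≥ Ls (H.add X) ∧ Rs (G.add X) ≥ Rs (H.add X)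

/-- Equivalence `G ∼ H`. -/
def Equiv (G H : SG) : Prop := Ge G H ∧ Ge H G

/-- Right's pass-allowed Left-stop `L̲s(G) = min_n Ls(G - n̂)`. -/
noncomputable def lsU (G : SG) : ℝ := ⨅ n : ℕ, Ls (G.add (wait n).conj)

/-- Left's pass-allowed Right-stop `R̄s(G) = max_n Rs(G + n̂)`. -/
noncomputable def rsO (G : SG) : ℝ := ⨆ n : ℕ, Rs (G.add (wait n))

/-- `L̄s(G) = max_n Ls(G + n̂)`. -/
noncomputable def lsO (G : SG) : ℝ := ⨆ n : ℕ, Ls (G.add (wait n))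

/-- `R̲s(G) = min_n Rs(G + n̂)`. -/
noncomputable def rsU (G : SG) : ℝ := ⨅ n : ℕ, Rs (G.add (wait n))

/-- Identity of games: same tree structure (up to reordering of options),
with identical atoms at atomic positions. -/
def Ident : SG → SG → Prop
  | mk a1 b1 L1 R1, mk a2 b2 L2 R2 =>
    (L1 = [] ↔ L2 = []) ∧ (L1 = [] → a1 = a2) ∧
    (R1 = [] ↔ R2 = []) ∧ (R1 = [] → b1 = b2) ∧
    (∀ x ∈ L1, ∃ y : {z // z ∈ L2}, Ident x y.1) ∧
    (∀ y ∈ L2, ∃ x : {z // z ∈ L1}, Ident x.1 y) ∧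
    (∀ x ∈ R1, ∃ y : {z // z ∈ R2}, Ident x y.1) ∧
    (∀ y ∈ R2, ∃ x : {z // z ∈ R1}, Ident x.1 y)
termination_by g h => sizeOf g
decreasing_by all_goals (simp only [SG.mk.sizeOf_spec]; (first | (have := sizeOf_lt_of_mem x.2) | (have := sizeOf_lt_of_mem (by assumption : x ∈ _))); omega)

/-- `Linked H G`: `H` is linked to `G` (by some guaranteed `T`). -/
def Linked (H G : SG) : Prop :=
  ∃ T : SG, T.Guaranteed ∧ Ls (H.add T) < 0 ∧ 0 < Rs (G.add T)

/-- Replace every atom of `G` by `∅^x`. -/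
def subst (v : ℝ) : SG → SG
  | mk _ _ ls rs =>
    mk v v (ls.attach.map (fun x => subst v x.1)) (rs.attach.map (fun x => subst v x.1))
decreasing_by all_goals (simp only [SG.mk.sizeOf_spec]; (first | (have := sizeOf_lt_of_mem x.2) | (have := sizeOf_lt_of_mem (by assumption : x ∈ _))); omega)

/-- The maximum atom value in `G`. -/
noncomputable def maxAtom (G : SG) : ℝ := G.atomList.maximum.unbotD 0

/-- The minimum atom value in `G`. -/
noncomputable def minAtom (G : SG) : ℝ := G.atomList.minimum.untopD 0


end SG

/-! Given `Y`, compare `G` and `H` in the sum with the switch `X = ⟨Y | ∅^t⟩`. In `H + X` Left can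
move to `H + Y`, so `Rs (H + Y) ≤ Ls (H + X)`. In `G + X`, after any Left move in `G` Right answers
with `∅^t`, leaving `G^L + ∅^t`, whose Left-stop is an atom of `G` shifted by `t`; choosing
`t = Rs (G + Y) - maxAtom G` makes all of Left's moves worth at most `Rs (G + Y)`, so
`Ls (G + X) ≤ Rs (G + Y)`. The converse is the mirror image, with `⟨∅^t | X⟩`. -/

namespace List

variable {α : Type*} [LinearOrder α] {l : List α} {a c : α} (d : α)

theorem le_maximum_unbotD (h : a ∈ l) : a ≤ l.maximum.unbotD d :=
  WithBot.le_unbotD (le_maximum_of_mem' h)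

theorem maximum_unbotD_le (hne : l ≠ []) (h : ∀ x ∈ l, x ≤ c) : l.maximum.unbotD d ≤ c :=
  (WithBot.unbotD_le_iff fun hl => absurd (maximum_eq_bot.1 hl) hne).2
    (maximum_le_of_forall_le fun x hx => WithBot.coe_le_coe.2 (h x hx))

theorem maximum_unbotD_mem (hne : l ≠ []) : l.maximum.unbotD d ∈ l := by
  rw [← coe_maximum_of_length_pos (length_pos_of_ne_nil hne), WithBot.unbotD_coe]
  exact maximum_of_length_pos_mem _

theorem minimum_untopD_le (h : a ∈ l) : l.minimum.untopD d ≤ a :=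
  WithTop.untopD_le (minimum_le_of_mem' h)

theorem le_minimum_untopD (hne : l ≠ []) (h : ∀ x ∈ l, c ≤ x) : c ≤ l.minimum.untopD d :=
  (WithTop.le_untopD_iff fun hl => absurd (minimum_eq_top.1 hl) hne).2
    (le_minimum_of_forall_le fun x hx => WithTop.coe_le_coe.2 (h x hx))

theorem minimum_untopD_mem (hne : l ≠ []) : l.minimum.untopD d ∈ l := by
  rw [← coe_minimum_of_length_pos (length_pos_of_ne_nil hne), WithTop.untopD_coe]
  exact minimum_of_length_pos_mem _

end List

namespace SG

@[simp] theorem L_mk (a b : ℝ) (l r : List SG) : (mk a b l r).L = l := rfl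
@[simp] theorem R_mk (a b : ℝ) (l r : List SG) : (mk a b l r).R = r := rfl
@[simp] theorem la_mk (a b : ℝ) (l r : List SG) : (mk a b l r).la = a := rfl
@[simp] theorem ra_mk (a b : ℝ) (l r : List SG) : (mk a b l r).ra = b := rfl

theorem sizeOf_lt_of_mem_L {g x : SG} (h : x ∈ g.L) : sizeOf x < sizeOf g := by
  cases g with | mk a b ls rs =>
  have : sizeOf x < sizeOf ls := sizeOf_lt_of_mem h
  simp only [mk.sizeOf_spec]
  omega

theorem sizeOf_lt_of_mem_R {g x : SG} (h : x ∈ g.R) : sizeOf x < sizeOf g := by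
  cases g with | mk a b ls rs =>
  have : sizeOf x < sizeOf rs := sizeOf_lt_of_mem h
  simp only [mk.sizeOf_spec]
  omega

theorem induction_on_options {P : SG → Prop} (g : SG)
    (h : ∀ g : SG, (∀ x ∈ g.L, P x) → (∀ x ∈ g.R, P x) → P g) : P g :=
  h g (fun x _ => induction_on_options x h) (fun x _ => induction_on_options x h)
termination_by sizeOf g
decreasing_by
  · exact sizeOf_lt_of_mem_L ‹_›
  · exact sizeOf_lt_of_mem_R ‹_›

theorem L_add (g h : SG) : (g.add h).L = g.L.map (·.add h) ++ h.L.map (g.add ·) := by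
  cases g; cases h
  rw [add]
  simp

theorem R_add (g h : SG) : (g.add h).R = g.R.map (·.add h) ++ h.R.map (g.add ·) := by
  cases g; cases h
  rw [add]
  simp

theorem la_add (g h : SG) : (g.add h).la = g.la + h.la := by
  cases g; cases h
  rw [add]; rfl

theorem ra_add (g h : SG) : (g.add h).ra = g.ra + h.ra := by
  cases g; cases h
  rw [add]; rfl

theorem Ls_of_L_eq_nil {g : SG} (h : g.L = []) : Ls g = g.la := by
  cases g
  simp_all [Ls, stops, L, la]

theorem Ls_of_L_ne_nil {g : SG} (h : g.L ≠ []) : Ls g = (g.L.map Rs).maximum.unbotD 0 := by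
  cases g
  simp_all [Ls, stops, L]
  rfl

theorem Rs_of_R_eq_nil {g : SG} (h : g.R = []) : Rs g = g.ra := by
  cases g
  simp_all [Rs, stops, R, ra]

theorem Rs_of_R_ne_nil {g : SG} (h : g.R ≠ []) : Rs g = (g.R.map Ls).minimum.untopD 0 := by
  cases g
  simp_all [Rs, stops, R]
  rfl

theorem atomList_eq (g : SG) :
    g.atomList = (if g.L.isEmpty then [g.la] else (g.L.map atomList).flatten)
      ++ (if g.R.isEmpty then [g.ra] else (g.R.map atomList).flatten) := by
  cases g
  rw [atomList]
  simp [L, R, la, ra]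

theorem num_guaranteed (t : ℝ) : (num t).Guaranteed := by
  simp [num, Guaranteed, atomList]

theorem mk_guaranteed {a b : ℝ} {Y Z : SG} (hY : Y.Guaranteed) (hZ : Z.Guaranteed) :
    (mk a b [Y] [Z]).Guaranteed := by
  rw [Guaranteed]
  simp [hY, hZ]

theorem Rs_le_Ls_of_mem_L {g x : SG} (h : x ∈ g.L) : Rs x ≤ Ls g := by
  rw [Ls_of_L_ne_nil (List.ne_nil_of_mem h)]
  exact List.le_maximum_unbotD _ (List.mem_map_of_mem h)

theorem Rs_le_Ls_of_mem_R {g x : SG} (h : x ∈ g.R) : Rs g ≤ Ls x := by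
  rw [Rs_of_R_ne_nil (List.ne_nil_of_mem h)]
  exact List.minimum_untopD_le _ (List.mem_map_of_mem h)

theorem Ls_le_of_forall_mem_L {g : SG} {c : ℝ} (hne : g.L ≠ []) (h : ∀ x ∈ g.L, Rs x ≤ c) :
    Ls g ≤ c := by
  rw [Ls_of_L_ne_nil hne]
  exact List.maximum_unbotD_le _ (by simpa using hne) (by simpa using h)

theorem le_Rs_of_forall_mem_R {g : SG} {c : ℝ} (hne : g.R ≠ []) (h : ∀ x ∈ g.R, c ≤ Ls x) :
    c ≤ Rs g := by
  rw [Rs_of_R_ne_nil hne]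
  exact List.le_minimum_untopD _ (by simpa using hne) (by simpa using h)

theorem la_mem_atomList {g : SG} (h : g.L = []) : g.la ∈ g.atomList := by
  simp [atomList_eq g, h]

theorem ra_mem_atomList {g : SG} (h : g.R = []) : g.ra ∈ g.atomList := by
  simp [atomList_eq g, h]

theorem atomList_subset_of_mem_L {g x : SG} (h : x ∈ g.L) : x.atomList ⊆ g.atomList := by
  intro s hs
  simp only [atomList_eq g, List.isEmpty_iff, List.ne_nil_of_mem h, if_false]
  exact List.mem_append_left _ (List.mem_flatten.2 ⟨_, List.mem_map_of_mem h, hs⟩)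

theorem atomList_subset_of_mem_R {g x : SG} (h : x ∈ g.R) : x.atomList ⊆ g.atomList := by
  intro s hs
  simp only [atomList_eq g, List.isEmpty_iff, List.ne_nil_of_mem h, if_false]
  exact List.mem_append_right _ (List.mem_flatten.2 ⟨_, List.mem_map_of_mem h, hs⟩)

theorem stops_mem_atomList (g : SG) : Ls g ∈ g.atomList ∧ Rs g ∈ g.atomList := by
  induction g using induction_on_options with
  | h g ihL ihR =>
    constructor
    · by_cases h : g.L = []
      · rw [Ls_of_L_eq_nil h]
        exact la_mem_atomList h
      · obtain ⟨x, hx, hxg⟩ :=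
          List.mem_map.1 (List.maximum_unbotD_mem 0 (l := g.L.map Rs) (by simpa using h))
        rw [Ls_of_L_ne_nil h, ← hxg]
        exact atomList_subset_of_mem_L hx (ihL x hx).2
    · by_cases h : g.R = []
      · rw [Rs_of_R_eq_nil h]
        exact ra_mem_atomList h
      · obtain ⟨x, hx, hxg⟩ :=
          List.mem_map.1 (List.minimum_untopD_mem 0 (l := g.R.map Ls) (by simpa using h))
        rw [Rs_of_R_ne_nil h, ← hxg]
        exact atomList_subset_of_mem_R hx (ihR x hx).1

theorem atomList_add_num (g : SG) (t : ℝ) :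
    (g.add (num t)).atomList = g.atomList.map (· + t) := by
  induction g using induction_on_options with
  | h g ihL ihR =>
    have hL : (g.add (num t)).L = g.L.map (·.add (num t)) := by simp [L_add, num]
    have hR : (g.add (num t)).R = g.R.map (·.add (num t)) := by simp [R_add, num]
    rw [atomList_eq, atomList_eq g, hL, hR, la_add, ra_add, List.map_append, List.isEmpty_map,
      List.isEmpty_map]
    congr 1
    · split_ifs
      · simp [num]
      · simp only [List.map_flatten, List.map_map]
        exact congrArg List.flatten (List.map_congr_left ihL)
    · split_ifs
      · simp [num]
      · simp only [List.map_flatten, List.map_map]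
        exact congrArg List.flatten (List.map_congr_left ihR)

theorem Ls_add_num_le {g : SG} {m t : ℝ} (h : ∀ s ∈ g.atomList, s ≤ m) :
    Ls (g.add (num t)) ≤ m + t := by
  have hmem := (stops_mem_atomList (g.add (num t))).1
  rw [atomList_add_num] at hmem
  obtain ⟨s, hs, hst⟩ := List.mem_map.1 hmem
  linarith [h s hs]

theorem le_Rs_add_num {g : SG} {m t : ℝ} (h : ∀ s ∈ g.atomList, m ≤ s) :
    m + t ≤ Rs (g.add (num t)) := by
  have hmem := (stops_mem_atomList (g.add (num t))).2
  rw [atomList_add_num] at hmem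
  obtain ⟨s, hs, hst⟩ := List.mem_map.1 hmem
  linarith [h s hs]

theorem Rs_add_le_Ls_add_of_mem_L {g X Y : SG} (h : Y ∈ X.L) : Rs (g.add Y) ≤ Ls (g.add X) :=
  Rs_le_Ls_of_mem_L (by rw [L_add]; exact List.mem_append_right _ (List.mem_map_of_mem h))

theorem Rs_add_le_Ls_add_of_mem_R {g X Y : SG} (h : Y ∈ X.R) : Rs (g.add X) ≤ Ls (g.add Y) :=
  Rs_le_Ls_of_mem_R (by rw [R_add]; exact List.mem_append_right _ (List.mem_map_of_mem h))

theorem Ls_add_mk_le (g Y : SG) (a b t : ℝ) :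
    Ls (g.add (mk a b [Y] [num t])) ≤ max (Rs (g.add Y)) (maxAtom g + t) := by
  refine Ls_le_of_forall_mem_L (by simp [L_add]) fun x hx => ?_
  simp only [L_add, L_mk, List.mem_append, List.mem_map, List.mem_singleton] at hx
  rcases hx with ⟨l, hl, rfl⟩ | ⟨_, rfl, rfl⟩
  · calc Rs (l.add _) ≤ Ls (l.add (num t)) := Rs_add_le_Ls_add_of_mem_R (List.mem_singleton_self _)
      _ ≤ maxAtom g + t :=
        Ls_add_num_le fun s hs => List.le_maximum_unbotD _ (atomList_subset_of_mem_L hl hs)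
      _ ≤ _ := le_max_right _ _
  · exact le_max_left _ _

theorem le_Rs_add_mk (g X : SG) (a b t : ℝ) :
    min (Ls (g.add X)) (minAtom g + t) ≤ Rs (g.add (mk a b [num t] [X])) := by
  refine le_Rs_of_forall_mem_R (by simp [R_add]) fun x hx => ?_
  simp only [R_add, R_mk, List.mem_append, List.mem_map, List.mem_singleton] at hx
  rcases hx with ⟨r, hr, rfl⟩ | ⟨_, rfl, rfl⟩
  · calc min _ _ ≤ minAtom g + t := min_le_right _ _
      _ ≤ Rs (r.add (num t)) :=
        le_Rs_add_num fun s hs => List.minimum_untopD_le _ (atomList_subset_of_mem_R hr hs)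
      _ ≤ Ls (r.add _) := Rs_add_le_Ls_add_of_mem_L (List.mem_singleton_self _)
  · exact min_le_left _ _

theorem ls_comparison_iff_rs_comparison_general (G H : SG) :
    (∀ X : SG, X.Guaranteed → Ls (G.add X) ≥ Ls (H.add X)) ↔
      (∀ Y : SG, Y.Guaranteed → Rs (G.add Y) ≥ Rs (H.add Y)) := by
  constructor
  · intro hLs Y hY
    set t := Rs (G.add Y) - maxAtom G
    have hX : (mk 0 0 [Y] [num t]).Guaranteed := mk_guaranteed hY (num_guaranteed t)
    calc Rs (H.add Y) ≤ Ls (H.add (mk 0 0 [Y] [num t])) :=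
          Rs_add_le_Ls_add_of_mem_L (List.mem_singleton_self _)
      _ ≤ Ls (G.add (mk 0 0 [Y] [num t])) := hLs _ hX
      _ ≤ max (Rs (G.add Y)) (maxAtom G + t) := Ls_add_mk_le G Y 0 0 t
      _ = Rs (G.add Y) := by simp [t]
  · intro hRs X hX
    set t := Ls (H.add X) - minAtom H
    have hY : (mk 0 0 [num t] [X]).Guaranteed := mk_guaranteed (num_guaranteed t) hX
    calc Ls (H.add X) = min (Ls (H.add X)) (minAtom H + t) := by simp [t]
      _ ≤ Rs (H.add (mk 0 0 [num t] [X])) := le_Rs_add_mk H X 0 0 t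
      _ ≤ Rs (G.add (mk 0 0 [num t] [X])) := hRs _ hY
      _ ≤ Ls (G.add X) := Rs_add_le_Ls_add_of_mem_R (List.mem_singleton_self _)

/-- Left-stop comparison in all sums iff Right-stop comparison in all sums. -/
theorem ls_comparison_iff_rs_comparison (G H : SG) (hG : G.Guaranteed)
    (hH : H.Guaranteed) :
    (∀ X : SG, X.Guaranteed → Ls (G.add X) ≥ Ls (H.add X)) ↔
      (∀ Y : SG, Y.Guaranteed → Rs (G.add Y) ≥ Rs (H.add Y)) :=
  ls_comparison_iff_rs_comparison_general G H

end SG
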